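/- Let z : ℕ → {0,…,M} be a fixed delay sequence with switch time t_z := min{z_0, 1+z_1, …, (M−1)+z_{M−1}}. For every history-dependent randomized policy π, every initial state s_0 ∈ S with μ(s_0) > 0, and every s ∈ S: P^π_z(s̃_{t_z} = s | s̃_0 = s_0) = ∑_{s_1,…,s_{t_z−1} ∈ S} ∏_{i=0}^{t_z−1} P(s_i, ā_i)(s_{i+1}), where s_{t_z} := s. In particular this conditional law does not depend on π: up to the switch time, the executed actions equal the default actions almost surely and the state distribution is the composition of the transition kernels along the default action queue. -/

import Mathlib

open scoped ENNReal

/-! ## Stochastic execution-delay MDP with a fixed (observed) delay sequence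

`S` and `A` are the finite state and action spaces, `P : S → A → PMF S` is the
transition kernel, `μ : PMF S` the initial distribution, `M ≥ 1` the delay bound,
`abar` the default action queue (only indices `< M` are ever used), and
`z : ℕ → {0,…,M}` a fixed delay sequence.  `P^π_z` denotes the process law with
these deterministic delays. -/

/-- Effective decision time `τ_t(z)`: the largest `t' ≤ t` with `t' + z t' ≤ t`. -/
def tau (z : ℕ → ℕ) (t : ℕ) : ℕ := Nat.findGreatest (fun t' => t' + z t' ≤ t) t

theorem tau_le (z : ℕ → ℕ) (t : ℕ) : tau z t ≤ t := Nat.findGreatest_le t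

/-- Switch time `t_z = min {z 0, 1 + z 1, …, (M-1) + z (M-1)}`. -/
noncomputable def switchTime (M : ℕ) (z : ℕ → ℕ) : ℕ := sInf {x | ∃ t' < M, t' + z t' = x}

/-- A history-dependent randomized policy (for a fixed, observed delay sequence):
at time `t` it maps the history `(s 0, …, s t, a 0, …, a (t-1))` to a distribution
over actions.  It is encoded on whole sequences, together with `IsCausal`. -/
def IsCausal {S A : Type*} (π : ℕ → (ℕ → S) → (ℕ → A) → PMF A) : Prop :=
  ∀ (t : ℕ) (s s' : ℕ → S) (a a' : ℕ → A),
    (∀ i ≤ t, s i = s' i) → (∀ j < t, a j = a' j) → π t s a = π t s' a'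

/-- The probability that the action executed at time `t` is `a t`, given the history:
if `t < min {z 0, 1 + z 1, …, t + z t}` the default action `abar t` is executed
deterministically; otherwise the action is drawn from `π (τ_t) (h (τ_t))`. -/
noncomputable def actProb {S A : Type*} [DecidableEq A] (abar : ℕ → A)
    (π : ℕ → (ℕ → S) → (ℕ → A) → PMF A) (z : ℕ → ℕ)
    (t : ℕ) (s : ℕ → S) (a : ℕ → A) : ℝ≥0∞ :=
  if t < sInf {x | ∃ t' ≤ t, t' + z t' = x} then (if a t = abar t then 1 else 0)
  else π (tau z t) s a (a t)

/-- `P^π_z`-probability of the prefix `(s 0, a 0, …, s t, a t)`. -/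
noncomputable def pathProb {S A : Type*} [DecidableEq A] (P : S → A → PMF S)
    (μ : PMF S) (abar : ℕ → A) (π : ℕ → (ℕ → S) → (ℕ → A) → PMF A) (z : ℕ → ℕ)
    (t : ℕ) (s : ℕ → S) (a : ℕ → A) : ℝ≥0∞ :=
  μ (s 0) * (∏ k ∈ Finset.range (t + 1), actProb abar π z k s a)
    * (∏ k ∈ Finset.range t, P (s k) (a k) (s (k + 1)))

/-- Extension of a finite vector by a default value. -/
def ext {X : Type*} [Inhabited X] {n : ℕ} (v : Fin n → X) : ℕ → X :=
  fun i => if h : i < n then v ⟨i, h⟩ else default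

open Classical in
/-- `P^π_z`-probability of an event `E` on `(s̃ 0, …, s̃ t, ã 0, …, ã t)`. -/
noncomputable def eventProb {S A : Type*} [Fintype S] [Inhabited S] [Fintype A]
    [DecidableEq A] [Inhabited A] (P : S → A → PMF S) (μ : PMF S)
    (abar : ℕ → A) (π : ℕ → (ℕ → S) → (ℕ → A) → PMF A) (z : ℕ → ℕ)
    (t : ℕ) (E : (Fin (t + 1) → S) → (Fin (t + 1) → A) → Prop) : ℝ≥0∞ :=
  ∑ v : Fin (t + 1) → S, ∑ w : Fin (t + 1) → A,
    if E v w then pathProb P μ abar π z t (ext v) (ext w) else 0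

/-! Before the switch time every executed action is the default one, so in the law of
`(s̃, ã)` up to `t_z` the actions before `t_z` are point masses at `abar`, while the action at
`t_z` is drawn from a distribution that (by causality) does not look at itself and therefore sums
out to one. Both events in the quotient force `s̃ 0 = s0`, so each probability is `μ s0` times
the weight of the Markov chain driven by `abar`, and the chain started at `s0` has total mass
one. -/

lemma PMF.sum_coe_eq_one {α : Type*} [Fintype α] (p : PMF α) : ∑ a, p a = 1 := by
  rw [← tsum_fintype (L := SummationFilter.unconditional _)]
  exact p.tsum_coe

lemma Fintype.sum_fin_succ_eq_sum_snoc {X R : Type*} {n : ℕ} [AddCommMonoid R] [Fintype X]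
    (f : (Fin (n + 1) → X) → R) :
    ∑ v, f v = ∑ u : Fin n → X, ∑ a, f (Fin.snoc u a) := by
  rw [← (Fin.snocEquiv fun _ => X).sum_comp, Fintype.sum_prod_type, Finset.sum_comm]
  rfl

section Tuples

variable {X : Type*} [Inhabited X] {n : ℕ}

lemma ext_of_lt (v : Fin n → X) {i : ℕ} (h : i < n) : ext v i = v ⟨i, h⟩ := dif_pos h

lemma ext_val (v : Fin n → X) (i : Fin n) : ext v i = v i := ext_of_lt v i.isLt

lemma ext_zero (v : Fin (n + 1) → X) : ext v 0 = v 0 := ext_val v 0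

lemma ext_snoc_of_lt (u : Fin n → X) (a : X) {k : ℕ} (hk : k < n) :
    ext (Fin.snoc u a : Fin (n + 1) → X) k = ext u k := by
  rw [ext_of_lt _ (Nat.lt_succ_of_lt hk), ext_of_lt u hk]
  exact Fin.snoc_castSucc (α := fun _ => X) a u ⟨k, hk⟩

lemma ext_snoc_self (u : Fin n → X) (a : X) : ext (Fin.snoc u a : Fin (n + 1) → X) n = a := by
  rw [ext_of_lt _ n.lt_succ_self]
  exact Fin.snoc_last (α := fun _ => X) a u

end Tuples

lemma prod_kernel_snoc {S : Type*} [Inhabited S] {n : ℕ} (Q : ℕ → S → PMF S)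
    (u : Fin (n + 1) → S) (a : S) :
    ∏ k ∈ Finset.range (n + 1), Q k (ext (Fin.snoc u a : Fin (n + 2) → S) k)
        (ext (Fin.snoc u a : Fin (n + 2) → S) (k + 1))
      = (∏ k ∈ Finset.range n, Q k (ext u k) (ext u (k + 1))) * Q n (ext u n) a := by
  rw [Finset.prod_range_succ, ext_snoc_of_lt u a n.lt_succ_self, ext_snoc_self]
  congr 1
  refine Finset.prod_congr rfl fun k hk => ?_
  have hk : k < n := Finset.mem_range.mp hk
  rw [ext_snoc_of_lt u a (by omega), ext_snoc_of_lt u a (by omega)]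

lemma sum_prod_kernel_eq_one {S : Type*} [Fintype S] [DecidableEq S] [Inhabited S]
    (Q : ℕ → S → PMF S) (n : ℕ) (s0 : S) :
    ∑ v : Fin (n + 1) → S,
      (if v 0 = s0 then ∏ k ∈ Finset.range n, Q k (ext v k) (ext v (k + 1)) else 0) = 1 := by
  induction n with
  | zero =>
    rw [← (Equiv.funUnique (Fin 1) S).symm.sum_comp]
    simp
  | succ n ih =>
    rw [Fintype.sum_fin_succ_eq_sum_snoc, ← ih]
    refine Finset.sum_congr rfl fun u _ => ?_
    simp only [← ext_zero, ext_snoc_of_lt u _ n.succ_pos, prod_kernel_snoc]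
    split_ifs
    · rw [← Finset.mul_sum, PMF.sum_coe_eq_one, mul_one]
    · exact Finset.sum_const_zero

section Policy

variable {S A : Type*} [DecidableEq A] (abar : ℕ → A)
  (π : ℕ → (ℕ → S) → (ℕ → A) → PMF A)

def ExecutesDefaultBefore (z : ℕ → ℕ) (T : ℕ) : Prop :=
  ∀ k < T, ∀ s a, actProb abar π z k s a = if a k = abar k then 1 else 0

lemma executesDefaultBefore_switchTime {M : ℕ} {z : ℕ → ℕ} (hz : ∀ i, z i ≤ M) :
    ExecutesDefaultBefore abar π z (switchTime M z) := by
  intro k hk s a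
  refine if_pos ?_
  -- for `M = 0` the switch time is `sInf ∅ = 0`
  have hM : 0 < M := by
    by_contra! hM
    simp [switchTime, Nat.le_zero.mp hM] at hk
  have hTM : switchTime M z ≤ M :=
    (Nat.sInf_le (show z 0 ∈ {x | ∃ t' < M, t' + z t' = x} from ⟨0, hM, zero_add _⟩)).trans
      (hz 0)
  -- a `t' ≤ k` with `t' + z t' ≤ k < t_z ≤ M` would occur in the infimum defining `t_z`
  obtain ⟨t', ht'k, ht'⟩ := Nat.sInf_mem (s := {x | ∃ t' ≤ k, t' + z t' = x})
    ⟨z 0, 0, k.zero_le, zero_add _⟩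
  have hTt' : switchTime M z ≤ t' + z t' := Nat.sInf_le ⟨t', by omega, rfl⟩
  omega

lemma sum_actProb_snoc [Fintype A] [Inhabited A] (z : ℕ → ℕ) (hπ : IsCausal π) (t : ℕ)
    (s : ℕ → S) (u : Fin t → A) :
    ∑ a, actProb abar π z t s (ext (Fin.snoc u a : Fin (t + 1) → A)) = 1 := by
  simp only [actProb, ext_snoc_self]
  split_ifs
  · simp
  · have hpast : ∀ a, π (tau z t) s (ext (Fin.snoc u a : Fin (t + 1) → A))
        = π (tau z t) s (ext (Fin.snoc u default : Fin (t + 1) → A)) := fun a =>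
      hπ _ _ _ _ _ (fun _ _ => rfl) fun j hj => by
        have hjt : j < t := hj.trans_le (tau_le z t)
        rw [ext_snoc_of_lt u a hjt, ext_snoc_of_lt u default hjt]
    simp only [hpast, PMF.sum_coe_eq_one]

variable [Inhabited A] [Inhabited S] (P : S → A → PMF S) (μ : PMF S) {z : ℕ → ℕ}
  {T : ℕ}

lemma pathProb_snoc_of_executesDefaultBefore (hdefault : ExecutesDefaultBefore abar π z T)
    (v : Fin (T + 1) → S) (u : Fin T → A) (a : A) :
    pathProb P μ abar π z T (ext v) (ext (Fin.snoc u a : Fin (T + 1) → A))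
      = (if u = (fun i : Fin T => abar i) then
          μ (v 0) * ∏ k ∈ Finset.range T, P (ext v k) (abar k) (ext v (k + 1)) else 0)
        * actProb abar π z T (ext v) (ext (Fin.snoc u a : Fin (T + 1) → A)) := by
  rw [pathProb, Finset.prod_range_succ, ext_zero]
  split_ifs with hu
  · subst hu
    have hact : ∏ k ∈ Finset.range T, actProb abar π z k (ext v)
        (ext (Fin.snoc (fun i : Fin T => abar i) a : Fin (T + 1) → A)) = 1 :=
      Finset.prod_eq_one fun k hk => by
        have hk := Finset.mem_range.mp hk
        rw [hdefault k hk, ext_snoc_of_lt _ _ hk, ext_of_lt _ hk, if_pos rfl]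
    have hkernel : ∏ k ∈ Finset.range T, P (ext v k)
          (ext (Fin.snoc (fun i : Fin T => abar i) a : Fin (T + 1) → A) k) (ext v (k + 1))
        = ∏ k ∈ Finset.range T, P (ext v k) (abar k) (ext v (k + 1)) :=
      Finset.prod_congr rfl fun k hk => by
        have hk := Finset.mem_range.mp hk
        rw [ext_snoc_of_lt _ _ hk, ext_of_lt _ hk]
    rw [hact, hkernel]
    ring
  · obtain ⟨i, hi⟩ : ∃ i, u i ≠ abar i := by
      contrapose! hu
      exact funext hu
    have hact : ∏ k ∈ Finset.range T, actProb abar π z k (ext v)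
        (ext (Fin.snoc u a : Fin (T + 1) → A)) = 0 :=
      Finset.prod_eq_zero (Finset.mem_range.mpr i.isLt) <| by
        rw [hdefault _ i.isLt, ext_snoc_of_lt _ _ i.isLt, ext_val, if_neg hi]
    simp only [hact, zero_mul, mul_zero]

variable [Fintype A]

lemma sum_pathProb_of_executesDefaultBefore (hπ : IsCausal π)
    (hdefault : ExecutesDefaultBefore abar π z T) (v : Fin (T + 1) → S) :
    ∑ w : Fin (T + 1) → A, pathProb P μ abar π z T (ext v) (ext w)
      = μ (v 0) * ∏ k ∈ Finset.range T, P (ext v k) (abar k) (ext v (k + 1)) := by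
  simp_rw [Fintype.sum_fin_succ_eq_sum_snoc,
    pathProb_snoc_of_executesDefaultBefore abar π P μ hdefault, ← Finset.mul_sum,
    sum_actProb_snoc abar π z hπ, mul_one]
  exact Fintype.sum_ite_eq' _ _

lemma eventProb_of_executesDefaultBefore [Fintype S] (hπ : IsCausal π)
    (hdefault : ExecutesDefaultBefore abar π z T) {s0 : S} (E : (Fin (T + 1) → S) → Prop)
    [DecidablePred E] (hE : ∀ v, E v → v 0 = s0) :
    eventProb P μ abar π z T (fun v _ => E v)
      = μ s0 * ∑ v : Fin (T + 1) → S,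
          if E v then ∏ k ∈ Finset.range T, P (ext v k) (abar k) (ext v (k + 1)) else 0 := by
  rw [eventProb, Finset.mul_sum]
  refine Finset.sum_congr rfl fun v _ => ?_
  split_ifs with hv
  · rw [sum_pathProb_of_executesDefaultBefore abar π P μ hπ hdefault v, hE v hv]
  · rw [Finset.sum_const_zero, mul_zero]

end Policy

theorem statement7_general {S A : Type*} [Fintype S] [DecidableEq S] [Inhabited S]
    [Fintype A] [DecidableEq A] [Inhabited A]
    (P : S → A → PMF S) (μ : PMF S) (M : ℕ) (abar : ℕ → A)
    (z : ℕ → ℕ) (hz : ∀ i, z i ≤ M)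
    (π : ℕ → (ℕ → S) → (ℕ → A) → PMF A) (hπ : IsCausal π)
    (s0 : S) (hs0 : 0 < μ s0) (s : S) :
    eventProb P μ abar π z (switchTime M z)
        (fun v _ => v (Fin.last (switchTime M z)) = s ∧ v 0 = s0)
      / eventProb P μ abar π z (switchTime M z) (fun v _ => v 0 = s0)
      = ∑ f : Fin (switchTime M z + 1) → S,
          if f 0 = s0 ∧ f (Fin.last (switchTime M z)) = s then
            ∏ i ∈ Finset.range (switchTime M z),
              P (ext f i) (abar i) (ext f (i + 1))
          else 0 := by
  have hdefault := executesDefaultBefore_switchTime abar π hz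
  rw [eventProb_of_executesDefaultBefore abar π P μ hπ hdefault _ fun _ h => h.2,
    eventProb_of_executesDefaultBefore abar π P μ hπ hdefault _ fun _ h => h,
    sum_prod_kernel_eq_one (fun k s' => P s' (abar k)), mul_one, mul_comm,
    ENNReal.mul_div_cancel_right hs0.ne' (PMF.apply_ne_top μ s0)]
  exact Finset.sum_congr rfl fun v _ => if_congr and_comm rfl rfl

/-- Let `z` be a fixed delay sequence with switch time
`t_z = min {z 0, 1 + z 1, …, (M-1) + z (M-1)}`.  For every history-dependent
randomized policy `π`, every initial state `s0` with `μ s0 > 0`, and every `s : S`: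
`P^π_z(s̃ t_z = s | s̃ 0 = s0) = ∑_{s_1,…,s_{t_z - 1}} ∏_{i<t_z} P s_i (abar i) s_{i+1}`
(with `s_{t_z} := s`); in particular this conditional law does not depend on `π`. -/
theorem statement7 {S A : Type*} [Fintype S] [DecidableEq S] [Inhabited S]
    [Fintype A] [DecidableEq A] [Inhabited A]
    (P : S → A → PMF S) (μ : PMF S) (M : ℕ) (hM : 1 ≤ M) (abar : ℕ → A)
    (z : ℕ → ℕ) (hz : ∀ i, z i ≤ M)
    (π : ℕ → (ℕ → S) → (ℕ → A) → PMF A) (hπ : IsCausal π)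
    (s0 : S) (hs0 : 0 < μ s0) (s : S) :
    eventProb P μ abar π z (switchTime M z)
        (fun v _ => v (Fin.last (switchTime M z)) = s ∧ v 0 = s0)
      / eventProb P μ abar π z (switchTime M z) (fun v _ => v 0 = s0)
      = ∑ f : Fin (switchTime M z + 1) → S,
          if f 0 = s0 ∧ f (Fin.last (switchTime M z)) = s then
            ∏ i ∈ Finset.range (switchTime M z),
              P (ext f i) (abar i) (ext f (i + 1))
          else 0 :=
  statement7_general P μ M abar z hz π hπ s0 hs0 s
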